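/- If A is an irreducible Metzler matrix with regular splitting A = T + U (T ⪰ 0, U Metzler and Hurwitz), then the leading eigenvalue of A is positive (respectively zero) if and only if the spectral radius ρ(−T U⁻¹) is greater than 1 (respectively equal to 1). -/

import Mathlib

/-!
Write `ρ` for the spectral radius and `s` for the largest real part of an eigenvalue. For a real
matrix, `ρ(X) < t` iff `(t⁻¹ X)ⁿ → 0` (Gelfand's formula one way, an eigenvector the other), and
then `(t - X)⁻¹ = ∑ Xⁿ / tⁿ⁺¹`, which is entrywise nonnegative when `X` is. For `X ≥ 0` this gives
the monotonicity of `ρ`, the Collatz–Wielandt bounds and `ρ(X) ∈ σ(X)`; shifting a Metzler matrix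
by a multiple of the identity makes it nonnegative and turns these into statements about `s`.

For the splitting `A = T + U`, `t - A = (1 - T (t - U)⁻¹) (t - U)`, so `t ≥ 0` is an eigenvalue of
`A` iff `1` is an eigenvalue of `K(t) = T (t - U)⁻¹ ≥ 0`, and `ρ(K(t))` decreases with `t`. As
`s(A)` is an eigenvalue of `A`, `s(A) ≥ 0` forces `ρ(K(0)) ≥ 1`, and if `s(A) > 0` and
`ρ(K(0)) = 1` then every `t ∈ [0, s(A)]` would be an eigenvalue of `A`. If `s(A) < 0`,
`1 - (-U)⁻¹ T` has the nonnegative inverse `1 + (-A)⁻¹ T`, so `ρ(K(0)) < 1`. If `s(A) = 0`,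
irreducibility gives a positive null vector `w` of `A`; then `(-U)⁻¹ T w = w`, so `ρ(K(0)) ≤ 1`.
-/

/-- The largest real part among the (complex) eigenvalues of a real square matrix. -/
noncomputable def specRealBound {N : ℕ} (M : Matrix (Fin N) (Fin N) ℝ) : ℝ :=
  sSup (Complex.re '' spectrum ℂ (M.map (Complex.ofReal : ℝ → ℂ)))

/-- The spectral radius of a real square matrix. -/
noncomputable def specRadius {N : ℕ} (M : Matrix (Fin N) (Fin N) ℝ) : ℝ :=
  sSup ((fun z : ℂ => ‖z‖) '' spectrum ℂ (M.map (Complex.ofReal : ℝ → ℂ)))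

/-- A Metzler matrix: nonnegative off-diagonal entries. -/
def IsMetzler {N : ℕ} (M : Matrix (Fin N) (Fin N) ℝ) : Prop :=
  ∀ i j, i ≠ j → 0 ≤ M i j

/-- Hurwitz: all complex eigenvalues have negative real part. -/
def IsHurwitz {N : ℕ} (M : Matrix (Fin N) (Fin N) ℝ) : Prop :=
  ∀ μ ∈ spectrum ℂ (M.map (Complex.ofReal : ℝ → ℂ)), μ.re < 0

/-- Irreducibility: every pair of indices is connected by a positive-weight path
(stated via powers of the matrix shifted to be nonnegative). -/
def MetzlerIrreducible {N : ℕ} (M : Matrix (Fin N) (Fin N) ℝ) : Prop :=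
  ∃ c : ℝ, (∀ i j, 0 ≤ (M + c • (1 : Matrix (Fin N) (Fin N) ℝ)) i j) ∧
    ∀ i j, ∃ n : ℕ, 0 < n ∧ 0 < ((M + c • (1 : Matrix (Fin N) (Fin N) ℝ)) ^ n) i j

open Matrix Filter Topology
open scoped NNReal ENNReal

theorem Matrix.exists_pow_mulVec_eq_smul_of_mem_spectrum {K n : Type*} [Field K] [Fintype n]
    [DecidableEq n] {M : Matrix n n K} {z : K} (hz : z ∈ spectrum K M) :
    ∃ v ≠ 0, ∀ k : ℕ, M ^ k *ᵥ v = z ^ k • v := by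
  rw [← Matrix.spectrum_toLin', ← Module.End.hasEigenvalue_iff_mem_spectrum] at hz
  obtain ⟨v, hv⟩ := hz.exists_hasEigenvector
  exact ⟨v, hv.2, fun k => by simpa [← Matrix.toLin'_pow] using hv.pow_apply k⟩

theorem spectrum.tendsto_inv_pow_smul_pow_of_spectralRadius_lt {A : Type*} [NormedRing A]
    [NormedAlgebra ℂ A] [CompleteSpace A] {a : A} {t : ℝ≥0} (h : spectralRadius ℂ a < t) :
    Tendsto (fun n : ℕ => ((t : ℂ) ^ n)⁻¹ • a ^ n) atTop (𝓝 0) := by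
  obtain ⟨q, hρq, hqt⟩ := ENNReal.lt_iff_exists_nnreal_btwn.1 h
  have hq : ∀ᶠ n : ℕ in atTop, ‖a ^ n‖ ≤ (q : ℝ) ^ n := by
    filter_upwards [(spectrum.pow_nnnorm_pow_one_div_tendsto_nhds_spectralRadius a).eventually
      (gt_mem_nhds hρq), eventually_gt_atTop 0] with n hn hn0
    rw [one_div, ENNReal.rpow_inv_lt_iff (by positivity), ENNReal.rpow_natCast] at hn
    exact_mod_cast hn.le
  have ht : (0 : ℝ) < t := (q.2.trans_lt (ENNReal.coe_lt_coe.1 hqt) :)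
  have hqt' : (q : ℝ) / t < 1 := by
    rw [div_lt_one ht]; exact_mod_cast hqt
  refine squeeze_zero_norm' ?_ (tendsto_pow_atTop_nhds_zero_of_lt_one (by positivity) hqt')
  filter_upwards [hq] with n hn
  rw [norm_smul, norm_inv, norm_pow, Complex.norm_real, Real.norm_of_nonneg ht.le, div_pow,
    inv_mul_eq_div]
  gcongr

section Spectrum

variable {N : ℕ}

theorem Matrix.ofReal_mem_spectrum_map_iff {n : Type*} [Fintype n] [DecidableEq n]
    (M : Matrix n n ℝ) (t : ℝ) :
    (t : ℂ) ∈ spectrum ℂ (M.map Complex.ofReal) ↔ t ∈ spectrum ℝ M := by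
  rw [mem_spectrum_iff_isRoot_charpoly, mem_spectrum_iff_isRoot_charpoly, Polynomial.IsRoot.def,
    Polynomial.IsRoot.def, show M.map Complex.ofReal = M.map Complex.ofRealHom from rfl,
    charpoly_map, Polynomial.eval_map, ← Complex.ofRealHom_eq_coe, Polynomial.eval₂_at_apply,
    Complex.ofRealHom_eq_coe, Complex.ofReal_eq_zero]

theorem Matrix.map_ofReal_mul {n : Type*} [Fintype n] (A B : Matrix n n ℝ) :
    (A * B).map Complex.ofReal = A.map Complex.ofReal * B.map Complex.ofReal :=
  Matrix.map_mul (f := Complex.ofRealHom)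

theorem Matrix.map_ofReal_pow {n : Type*} [Fintype n] [DecidableEq n] (A : Matrix n n ℝ)
    (k : ℕ) : (A ^ k).map Complex.ofReal = A.map Complex.ofReal ^ k :=
  Matrix.map_pow A Complex.ofRealHom k

theorem finite_spectrum_map_ofReal (M : Matrix (Fin N) (Fin N) ℝ) :
    (spectrum ℂ (M.map Complex.ofReal)).Finite :=
  Matrix.finite_spectrum _

theorem norm_le_specRadius {M : Matrix (Fin N) (Fin N) ℝ} {z : ℂ}
    (hz : z ∈ spectrum ℂ (M.map Complex.ofReal)) : ‖z‖ ≤ specRadius M :=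
  le_csSup ((finite_spectrum_map_ofReal M).image _).bddAbove ⟨z, hz, rfl⟩

theorem specRadius_nonneg (M : Matrix (Fin N) (Fin N) ℝ) : 0 ≤ specRadius M :=
  Real.sSup_nonneg <| by rintro _ ⟨z, -, rfl⟩; exact norm_nonneg z

theorem specRadius_lt_of_forall_norm_lt {M : Matrix (Fin N) (Fin N) ℝ} {t : ℝ} (ht : 0 < t)
    (h : ∀ z ∈ spectrum ℂ (M.map Complex.ofReal), ‖z‖ < t) : specRadius M < t := by
  rcases (spectrum ℂ (M.map Complex.ofReal)).eq_empty_or_nonempty with he | hne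
  · simpa [specRadius, he] using ht
  · exact ((finite_spectrum_map_ofReal M).image _).csSup_lt_iff (hne.image _) |>.2 <| by
      rintro _ ⟨z, hz, rfl⟩; exact h z hz

theorem exists_norm_eq_specRadius [NeZero N] (M : Matrix (Fin N) (Fin N) ℝ) :
    ∃ z ∈ spectrum ℂ (M.map Complex.ofReal), ‖z‖ = specRadius M :=
  ((spectrum.nonempty_of_isAlgClosed_of_finiteDimensional ℂ _).image _).csSup_mem
    ((finite_spectrum_map_ofReal M).image _)

theorem specRadius_mul_comm (X Y : Matrix (Fin N) (Fin N) ℝ) :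
    specRadius (X * Y) = specRadius (Y * X) := by
  simp only [specRadius, map_ofReal_mul]
  congr 2
  ext z
  rw [mem_spectrum_iff_isRoot_charpoly, mem_spectrum_iff_isRoot_charpoly, charpoly_mul_comm]

theorem add_mem_spectrum_map_add_smul_one_iff (M : Matrix (Fin N) (Fin N) ℝ) (c : ℝ) (z : ℂ) :
    z + c ∈ spectrum ℂ ((M + c • 1).map Complex.ofReal) ↔
      z ∈ spectrum ℂ (M.map Complex.ofReal) := by
  have : (M + c • 1).map Complex.ofReal = M.map Complex.ofReal + algebraMap ℂ _ (c : ℂ) := by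
    ext i j
    by_cases h : i = j <;> simp [Algebra.algebraMap_eq_smul_one, h]
  rw [this, spectrum.mem_iff, spectrum.mem_iff, map_add, add_sub_add_right_eq_sub]

theorem tendsto_inv_pow_smul_pow_of_specRadius_lt {X : Matrix (Fin N) (Fin N) ℝ} {t : ℝ}
    (h : specRadius X < t) : Tendsto (fun n : ℕ => (t ^ n)⁻¹ • X ^ n) atTop (𝓝 0) := by
  let _ := Matrix.linftyOpNormedRing (n := Fin N) (α := ℂ)
  let _ := Matrix.linftyOpNormedAlgebra (R := ℂ) (n := Fin N) (α := ℂ)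
  have : CompleteSpace (Matrix (Fin N) (Fin N) ℂ) := FiniteDimensional.complete ℂ _
  have ht : 0 < t := (specRadius_nonneg X).trans_lt h
  have hρ : spectralRadius ℂ (X.map Complex.ofReal) < (t.toNNReal : ℝ≥0∞) := by
    refine lt_of_le_of_lt (iSup₂_le fun z hz => ?_) (b := ENNReal.ofReal (specRadius X)) ?_
    · rw [← ENNReal.ofReal_coe_nnreal, coe_nnnorm]
      exact ENNReal.ofReal_le_ofReal (norm_le_specRadius hz)
    · exact (ENNReal.ofReal_lt_ofReal_iff ht).2 h
  have hC := spectrum.tendsto_inv_pow_smul_pow_of_spectralRadius_lt hρ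
  have hmap : ∀ n : ℕ, ((t : ℂ) ^ n)⁻¹ • X.map Complex.ofReal ^ n =
      ((t ^ n)⁻¹ • X ^ n).map Complex.ofReal := by
    intro n
    rw [← map_ofReal_pow]
    ext i j
    simp
  simp only [Real.coe_toNNReal _ ht.le, hmap] at hC
  simpa [Function.comp_def, Matrix.map_map] using
    ((continuous_id.matrix_map Complex.continuous_re).tendsto 0).comp hC

theorem specRadius_lt_of_tendsto_inv_pow_smul_pow {X : Matrix (Fin N) (Fin N) ℝ} {t : ℝ}
    (ht : 0 < t) (h : Tendsto (fun n : ℕ => (t ^ n)⁻¹ • X ^ n) atTop (𝓝 0)) :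
    specRadius X < t := by
  refine specRadius_lt_of_forall_norm_lt ht fun z hz => ?_
  obtain ⟨v, hv0, hv⟩ := exists_pow_mulVec_eq_smul_of_mem_spectrum hz
  obtain ⟨i, hi⟩ : ∃ i, v i ≠ 0 := Function.ne_iff.1 hv0
  have hcont : Continuous fun Y : Matrix (Fin N) (Fin N) ℝ => (Y.map Complex.ofReal *ᵥ v) i :=
    (continuous_apply i).comp
      ((continuous_id.matrix_map Complex.continuous_ofReal).matrix_mulVec continuous_const)
  have hpow : ∀ k : ℕ,
      (((t ^ k)⁻¹ • X ^ k).map Complex.ofReal *ᵥ v) i = (z / t) ^ k * v i := by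
    intro k
    have : ((t ^ k)⁻¹ • X ^ k).map Complex.ofReal =
        ((t : ℂ) ^ k)⁻¹ • X.map Complex.ofReal ^ k := by
      rw [← map_ofReal_pow]; ext; simp
    rw [this, smul_mulVec, hv, smul_smul, div_pow, div_eq_inv_mul]
    rfl
  have hlim := (hcont.tendsto 0).comp h
  simp only [Function.comp_def, hpow] at hlim
  have hzt : Tendsto (fun k : ℕ => (z / t) ^ k) atTop (𝓝 0) := by
    simpa [hi] using hlim.mul_const (v i)⁻¹
  have := tendsto_pow_atTop_nhds_zero_iff_norm_lt_one.1 hzt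
  rwa [norm_div, Complex.norm_real, Real.norm_of_nonneg ht.le, div_lt_one ht] at this

theorem specRadius_lt_iff_tendsto_pow (X : Matrix (Fin N) (Fin N) ℝ) {t : ℝ} (ht : 0 < t) :
    specRadius X < t ↔ Tendsto (fun n : ℕ => (t ^ n)⁻¹ • X ^ n) atTop (𝓝 0) :=
  ⟨tendsto_inv_pow_smul_pow_of_specRadius_lt, specRadius_lt_of_tendsto_inv_pow_smul_pow ht⟩

end Spectrum

theorem Matrix.tendsto_nhds_iff {α m n R : Type*} [TopologicalSpace R] {l : Filter α}
    {f : α → Matrix m n R} {M : Matrix m n R} :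
    Tendsto f l (𝓝 M) ↔ ∀ i j, Tendsto (fun a => f a i j) l (𝓝 (M i j)) :=
  tendsto_pi_nhds.trans (forall_congr' fun _ => tendsto_pi_nhds)

section Nonneg

variable {ι : Type*} [Fintype ι] {X Y : Matrix ι ι ℝ}

theorem Matrix.mul_nonneg_entrywise (hX : ∀ i j, 0 ≤ X i j) (hY : ∀ i j, 0 ≤ Y i j) (i j : ι) :
    0 ≤ (X * Y) i j :=
  Finset.sum_nonneg fun k _ => mul_nonneg (hX i k) (hY k j)

theorem Matrix.pow_nonneg_entrywise [DecidableEq ι] (hX : ∀ i j, 0 ≤ X i j) (k : ℕ) (i j : ι) :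
    0 ≤ (X ^ k) i j := by
  induction k generalizing i j with
  | zero => by_cases h : i = j <;> simp [h]
  | succ k ih => rw [pow_succ]; exact mul_nonneg_entrywise ih hX i j

theorem Matrix.pow_le_pow_entrywise [DecidableEq ι] (hX : ∀ i j, 0 ≤ X i j)
    (hXY : ∀ i j, X i j ≤ Y i j) (k : ℕ) (i j : ι) : (X ^ k) i j ≤ (Y ^ k) i j := by
  induction k generalizing i j with
  | zero => rfl
  | succ k ih =>
    rw [pow_succ, pow_succ]
    exact Finset.sum_le_sum fun l _ => mul_le_mul (ih i l) (hXY l j) (hX l j)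
      (pow_nonneg_entrywise (fun i j => (hX i j).trans (hXY i j)) k i l)

theorem Matrix.mul_le_mul_entrywise_left {Z : Matrix ι ι ℝ} (hX : ∀ i j, 0 ≤ X i j)
    (hYZ : ∀ i j, Y i j ≤ Z i j) (i j : ι) : (X * Y) i j ≤ (X * Z) i j :=
  Finset.sum_le_sum fun k _ => mul_le_mul_of_nonneg_left (hYZ k j) (hX i k)

theorem Matrix.mulVec_nonneg_of_nonneg (hX : ∀ i j, 0 ≤ X i j) {v : ι → ℝ} (hv : 0 ≤ v) :
    0 ≤ X *ᵥ v :=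
  fun i => Finset.sum_nonneg fun j _ => mul_nonneg (hX i j) (hv j)

theorem Matrix.mulVec_mono_of_nonneg (hX : ∀ i j, 0 ≤ X i j) {v w : ι → ℝ} (hvw : v ≤ w) :
    X *ᵥ v ≤ X *ᵥ w := by
  simpa [mulVec_sub] using mulVec_nonneg_of_nonneg hX (sub_nonneg.2 hvw)

theorem Matrix.pow_smul_le_pow_mulVec [DecidableEq ι] (hX : ∀ i j, 0 ≤ X i j) {y : ι → ℝ}
    {t : ℝ} (ht : 0 ≤ t) (h : t • y ≤ X *ᵥ y) (k : ℕ) : t ^ k • y ≤ X ^ k *ᵥ y := by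
  induction k with
  | zero => simp
  | succ k ih =>
    calc t ^ (k + 1) • y = t ^ k • (t • y) := by rw [pow_succ, mul_smul]
      _ ≤ t ^ k • (X *ᵥ y) := smul_le_smul_of_nonneg_left h (pow_nonneg ht k)
      _ = X *ᵥ (t ^ k • y) := (mulVec_smul X _ y).symm
      _ ≤ X *ᵥ (X ^ k *ᵥ y) := mulVec_mono_of_nonneg hX ih
      _ = X ^ (k + 1) *ᵥ y := by rw [mulVec_mulVec, pow_succ']

theorem Matrix.pow_mulVec_le_pow_smul [DecidableEq ι] (hX : ∀ i j, 0 ≤ X i j) {w : ι → ℝ}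
    {r : ℝ} (hr : 0 ≤ r) (h : X *ᵥ w ≤ r • w) (k : ℕ) : X ^ k *ᵥ w ≤ r ^ k • w := by
  induction k with
  | zero => simp
  | succ k ih =>
    calc X ^ (k + 1) *ᵥ w = X ^ k *ᵥ (X *ᵥ w) := by rw [mulVec_mulVec, pow_succ]
      _ ≤ X ^ k *ᵥ (r • w) := mulVec_mono_of_nonneg (pow_nonneg_entrywise hX k) h
      _ = r • (X ^ k *ᵥ w) := mulVec_smul _ r w
      _ ≤ r • (r ^ k • w) := smul_le_smul_of_nonneg_left ih hr
      _ = r ^ (k + 1) • w := by rw [pow_succ', mul_smul]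

theorem Matrix.mulVec_pos_of_pos (hX : ∀ i j, 0 < X i j) {y : ι → ℝ} (hy : 0 ≤ y) (hy0 : y ≠ 0)
    (i : ι) : 0 < (X *ᵥ y) i := by
  obtain ⟨j, hj⟩ : ∃ j, 0 < y j := by
    by_contra! h
    exact hy0 (le_antisymm h hy)
  exact lt_of_lt_of_le (mul_pos (hX i j) hj) <| Finset.single_le_sum
    (f := fun k => X i k * y k) (fun k _ => mul_nonneg (hX i k).le (hy k)) (Finset.mem_univ j)

theorem Matrix.exists_pos_commute [DecidableEq ι] (hX : ∀ i j, 0 ≤ X i j)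
    (hirr : ∀ i j, ∃ k, 0 < (X ^ k) i j) :
    ∃ G : Matrix ι ι ℝ, (∀ i j, 0 < G i j) ∧ Commute X G := by
  choose k hk using hirr
  set m := Finset.univ.sup fun p : ι × ι => k p.1 p.2
  refine ⟨∑ l ∈ Finset.range (m + 1), X ^ l, fun i j => ?_,
    Commute.sum_right _ _ _ fun l _ => Commute.self_pow X l⟩
  rw [Matrix.sum_apply]
  refine (hk i j).trans_le (Finset.single_le_sum (f := fun l => (X ^ l) i j)
    (fun l _ => pow_nonneg_entrywise hX l i j) (Finset.mem_range_succ_iff.2 ?_))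
  exact Finset.le_sup (f := fun p : ι × ι => k p.1 p.2) (Finset.mem_univ (i, j))

end Nonneg

theorem exists_pos_smul_le {ι : Type*} [Fintype ι] [Nonempty ι] {d w : ι → ℝ}
    (hd : ∀ i, 0 < d i) (hw : ∀ i, 0 < w i) : ∃ δ : ℝ, 0 < δ ∧ δ • w ≤ d := by
  obtain ⟨i₀, -, hi₀⟩ := Finset.univ.exists_min_image (fun i => d i / w i) Finset.univ_nonempty
  refine ⟨d i₀ / w i₀, div_pos (hd i₀) (hw i₀), fun i => ?_⟩
  calc d i₀ / w i₀ * w i ≤ d i / w i * w i :=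
        mul_le_mul_of_nonneg_right (hi₀ i (Finset.mem_univ i)) (hw i).le
    _ = d i := div_mul_cancel₀ _ (hw i).ne'

section Neumann

variable {N : ℕ} {X : Matrix (Fin N) (Fin N) ℝ} {t : ℝ}

theorem le_specRadius_of_mem_spectrum {M : Matrix (Fin N) (Fin N) ℝ} (ht : t ∈ spectrum ℝ M) :
    t ≤ specRadius M := by
  have := norm_le_specRadius ((ofReal_mem_spectrum_map_iff M t).2 ht)
  rw [Complex.norm_real, Real.norm_eq_abs] at this
  exact (le_abs_self t).trans this

theorem isUnit_smul_one_sub_of_specRadius_lt (h : specRadius X < t) : IsUnit (t • 1 - X) := by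
  by_contra hu
  have : t ∈ spectrum ℝ X := by rwa [spectrum.mem_iff, Algebra.algebraMap_eq_smul_one]
  exact (le_specRadius_of_mem_spectrum this).not_gt h

theorem tendsto_sum_inv_pow_smul_pow (h : specRadius X < t) :
    Tendsto (fun K => ∑ k ∈ Finset.range K, (t ^ (k + 1))⁻¹ • X ^ k) atTop
      (𝓝 (t • 1 - X)⁻¹) := by
  have ht : 0 < t := (specRadius_nonneg X).trans_lt h
  set R := (t • 1 - X)⁻¹
  have hXR : X * R = t • R - 1 := by
    have hR : (t • 1 - X) * R = 1 :=
      mul_nonsing_inv _ ((isUnit_iff_isUnit_det _).1 (isUnit_smul_one_sub_of_specRadius_lt h))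
    rw [← hR, sub_mul, smul_mul_assoc, one_mul, sub_sub_cancel]
  have hrem : ∀ K, ∑ k ∈ Finset.range K, (t ^ (k + 1))⁻¹ • X ^ k = R - (t ^ K)⁻¹ • (X ^ K * R) := by
    intro K
    induction K with
    | zero => simp
    | succ K ih =>
      rw [Finset.sum_range_succ, ih, pow_succ X, mul_assoc, hXR, mul_sub, mul_smul_comm, mul_one]
      match_scalars <;> field_simp; ring
  have hlim : Tendsto (fun K : ℕ => R - (t ^ K)⁻¹ • (X ^ K * R)) atTop (𝓝 (R - 0 * R)) := by
    have := (tendsto_inv_pow_smul_pow_of_specRadius_lt h).mul_const R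
    simp only [smul_mul_assoc] at this
    exact tendsto_const_nhds.sub this
  simpa [hrem] using hlim

end Neumann

section PerronFrobenius

variable {N : ℕ} {X Y : Matrix (Fin N) (Fin N) ℝ} {t : ℝ}

theorem sum_inv_pow_smul_pow_le_inv (hX : ∀ i j, 0 ≤ X i j) (h : specRadius X < t) (K : ℕ)
    (i j : Fin N) :
    (∑ k ∈ Finset.range K, (t ^ (k + 1))⁻¹ • X ^ k) i j ≤ (t • 1 - X)⁻¹ i j := by
  have ht : 0 < t := (specRadius_nonneg X).trans_lt h
  refine Monotone.ge_of_tendsto (monotone_nat_of_le_succ fun K => ?_)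
    (Matrix.tendsto_nhds_iff.1 (tendsto_sum_inv_pow_smul_pow h) i j) K
  rw [Finset.sum_range_succ, Matrix.add_apply, le_add_iff_nonneg_right, Matrix.smul_apply,
    smul_eq_mul]
  exact mul_nonneg (by positivity) (pow_nonneg_entrywise hX K i j)

theorem inv_smul_one_sub_nonneg (hX : ∀ i j, 0 ≤ X i j) (h : specRadius X < t) (i j : Fin N) :
    0 ≤ (t • 1 - X)⁻¹ i j := by
  simpa using sum_inv_pow_smul_pow_le_inv hX h 0 i j

theorem specRadius_lt_of_sum_le (hX : ∀ i j, 0 ≤ X i j) (ht : 0 < t)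
    {C : Matrix (Fin N) (Fin N) ℝ}
    (h : ∀ K i j, (∑ k ∈ Finset.range K, (t ^ (k + 1))⁻¹ • X ^ k) i j ≤ C i j) :
    specRadius X < t := by
  rw [specRadius_lt_iff_tendsto_pow X ht, Matrix.tendsto_nhds_iff]
  intro i j
  have hterm : ∀ k, 0 ≤ ((t ^ (k + 1))⁻¹ • X ^ k) i j := fun k =>
    mul_nonneg (by positivity) (pow_nonneg_entrywise hX k i j)
  have hsum : Summable fun k => ((t ^ (k + 1))⁻¹ • X ^ k) i j :=
    summable_of_sum_range_le hterm fun K => by simpa [Matrix.sum_apply] using h K i j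
  convert hsum.tendsto_atTop_zero.const_mul t using 2 with k
  · simp only [Matrix.smul_apply, smul_eq_mul, pow_succ]
    field_simp
  · simp

theorem specRadius_mono (hX : ∀ i j, 0 ≤ X i j) (hXY : ∀ i j, X i j ≤ Y i j) :
    specRadius X ≤ specRadius Y := by
  refine le_of_forall_gt fun t ht => ?_
  have ht0 : 0 < t := (specRadius_nonneg Y).trans_lt ht
  rw [specRadius_lt_iff_tendsto_pow _ ht0, Matrix.tendsto_nhds_iff] at ht ⊢
  intro i j
  refine squeeze_zero (fun k => ?_) (fun k => ?_) (ht i j)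
  · exact mul_nonneg (by positivity) (pow_nonneg_entrywise hX k i j)
  · exact mul_le_mul_of_nonneg_left (pow_le_pow_entrywise hX hXY k i j) (by positivity)

theorem le_specRadius_of_smul_le_mulVec (hX : ∀ i j, 0 ≤ X i j) {y : Fin N → ℝ} (hy : 0 ≤ y)
    (hy0 : y ≠ 0) (h : t • y ≤ X *ᵥ y) : t ≤ specRadius X := by
  by_contra! hlt
  have ht : 0 < t := (specRadius_nonneg X).trans_lt hlt
  have hlim : Tendsto (fun k : ℕ => ((t ^ k)⁻¹ • X ^ k) *ᵥ y) atTop (𝓝 0) := by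
    simpa [Function.comp_def] using ((continuous_id.matrix_mulVec continuous_const).tendsto 0).comp
      (tendsto_inv_pow_smul_pow_of_specRadius_lt hlt)
  have hle : ∀ k : ℕ, y ≤ ((t ^ k)⁻¹ • X ^ k) *ᵥ y := fun k =>
    calc y = (t ^ k)⁻¹ • t ^ k • y := (inv_smul_smul₀ (pow_ne_zero k ht.ne') y).symm
      _ ≤ (t ^ k)⁻¹ • (X ^ k *ᵥ y) :=
        smul_le_smul_of_nonneg_left (pow_smul_le_pow_mulVec hX ht.le h k) (by positivity)
      _ = ((t ^ k)⁻¹ • X ^ k) *ᵥ y := (smul_mulVec _ _ _).symm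
  exact hy0 (le_antisymm (ge_of_tendsto' hlim hle) hy)

theorem specRadius_le_of_mulVec_le_smul (hX : ∀ i j, 0 ≤ X i j) {w : Fin N → ℝ}
    (hw : ∀ i, 0 < w i) {r : ℝ} (hr : 0 ≤ r) (h : X *ᵥ w ≤ r • w) : specRadius X ≤ r := by
  refine le_of_forall_gt fun t hrt => ?_
  have ht : 0 < t := hr.trans_lt hrt
  rw [specRadius_lt_iff_tendsto_pow X ht, Matrix.tendsto_nhds_iff]
  intro i j
  have hlim : Tendsto (fun k : ℕ => (r / t) ^ k * (w i / w j)) atTop (𝓝 0) := by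
    simpa using (tendsto_pow_atTop_nhds_zero_of_lt_one (by positivity)
      ((div_lt_one ht).2 hrt)).mul_const (w i / w j)
  refine squeeze_zero (fun k => mul_nonneg (by positivity) (pow_nonneg_entrywise hX k i j))
    (fun k => ?_) hlim
  have hentry : (X ^ k) i j * w j ≤ r ^ k * w i :=
    calc (X ^ k) i j * w j ≤ (X ^ k *ᵥ w) i :=
          Finset.single_le_sum (f := fun l => (X ^ k) i l * w l)
            (fun l _ => mul_nonneg (pow_nonneg_entrywise hX k i l) (hw l).le) (Finset.mem_univ j)
      _ ≤ r ^ k * w i := pow_mulVec_le_pow_smul hX hr h k i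
  rw [Matrix.smul_apply, smul_eq_mul, div_pow, div_mul_div_comm, inv_mul_eq_div,
    div_le_div_iff₀ (by positivity) (by have := hw j; positivity)]
  nlinarith [hw j, pow_pos ht k]

theorem specRadius_mem_spectrum [NeZero N] (hX : ∀ i j, 0 ≤ X i j) :
    specRadius X ∈ spectrum ℝ X := by
  rcases (specRadius_nonneg X).eq_or_lt with h0 | hpos
  · obtain ⟨z, hz, hzρ⟩ := exists_norm_eq_specRadius X
    rw [← h0, norm_eq_zero] at hzρ
    rw [← h0, ← ofReal_mem_spectrum_map_iff]
    simpa [hzρ] using hz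
  by_contra hρ
  have hdet : (specRadius X • 1 - X).det ≠ 0 := by
    rw [spectrum.mem_iff, Algebra.algebraMap_eq_smul_one, not_not, isUnit_iff_isUnit_det,
      isUnit_iff_ne_zero] at hρ
    exact hρ
  -- the resolvent at `ρ` would bound the Neumann partial sums at `ρ` (limits of those at `t > ρ`)
  refine (specRadius_lt_of_sum_le hX hpos (C := (specRadius X • 1 - X)⁻¹)
    fun K i j => ?_).false
  have hinv : ContinuousAt (fun t : ℝ => (t • 1 - X)⁻¹) (specRadius X) :=
    (continuousAt_matrix_inv _ (by rw [Ring.inverse_eq_inv']; exact continuousAt_inv₀ hdet)).comp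
      (by fun_prop)
  have hcont : ContinuousAt (fun t : ℝ =>
      (∑ k ∈ Finset.range K, (t ^ (k + 1))⁻¹ • X ^ k) i j - (t • 1 - X)⁻¹ i j) (specRadius X) := by
    refine ContinuousAt.sub ?_ ((continuous_apply_apply i j).continuousAt.comp hinv)
    simp only [Matrix.sum_apply, Matrix.smul_apply, smul_eq_mul]
    fun_prop (disch := exact pow_ne_zero _ hpos.ne')
  exact sub_nonpos.1 <| le_of_tendsto (hcont.tendsto.mono_left nhdsWithin_le_nhds)
    (eventually_nhdsWithin_of_forall (s := Set.Ioi (specRadius X)) fun t ht =>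
      sub_nonpos.2 (sum_inv_pow_smul_pow_le_inv hX ht K i j))

theorem specRadius_lt_one_of_mul_eq_one {C : Matrix (Fin N) (Fin N) ℝ}
    (hX : ∀ i j, 0 ≤ X i j) (hC : ∀ i j, 0 ≤ C i j) (h : (1 - X) * C = 1) :
    specRadius X < 1 := by
  have hC' : C = 1 + X * C := by rw [← h, sub_mul, one_mul, sub_add_cancel]
  have hsum : ∀ K i j, (∑ k ∈ Finset.range K, X ^ k) i j ≤ C i j := by
    intro K
    induction K with
    | zero => simpa using hC
    | succ K ih =>
      intro i j
      rw [geom_sum_succ, hC', Matrix.add_apply, Matrix.add_apply, add_comm]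
      exact add_le_add_right (mul_le_mul_entrywise_left hX ih i j) _
  exact specRadius_lt_of_sum_le hX one_pos fun K i j => by simpa using hsum K i j

end PerronFrobenius

section Metzler

variable {N : ℕ} {M : Matrix (Fin N) (Fin N) ℝ} {c t : ℝ}

theorem IsMetzler.exists_nonneg_add_smul_one (hM : IsMetzler M) :
    ∃ c : ℝ, ∀ i j, 0 ≤ (M + c • 1) i j := by
  refine ⟨∑ k, |M k k|, fun i j => ?_⟩
  rcases eq_or_ne i j with rfl | hij
  · have := Finset.single_le_sum (fun k _ => abs_nonneg (M k k)) (Finset.mem_univ i)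
    simp only [Matrix.add_apply, Matrix.smul_apply, Matrix.one_apply_eq, smul_eq_mul, mul_one]
    linarith [neg_abs_le (M i i)]
  · simpa [hij] using hM i j hij

theorem IsHurwitz.specRealBound_neg [NeZero N] (hM : IsHurwitz M) : specRealBound M < 0 :=
  ((finite_spectrum_map_ofReal M).image _).csSup_lt_iff
    ((spectrum.nonempty_of_isAlgClosed_of_finiteDimensional ℂ _).image _) |>.2 <| by
      rintro _ ⟨z, hz, rfl⟩; exact hM z hz

theorem sub_mem_spectrum_of_nonneg_add_smul_one [NeZero N]
    (hP : ∀ i j, 0 ≤ (M + c • 1) i j) : specRadius (M + c • 1) - c ∈ spectrum ℝ M := by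
  have h := specRadius_mem_spectrum hP
  set ρ := specRadius (M + c • 1)
  rwa [show M + c • 1 = algebraMap ℝ _ c + M by rw [Algebra.algebraMap_eq_smul_one, add_comm],
    ← sub_add_cancel ρ c, spectrum.add_mem_add_iff] at h

theorem specRealBound_eq_specRadius_sub [NeZero N] (hP : ∀ i j, 0 ≤ (M + c • 1) i j) :
    specRealBound M = specRadius (M + c • 1) - c := by
  refine IsGreatest.csSup_eq ⟨⟨_, (ofReal_mem_spectrum_map_iff M _).2
    (sub_mem_spectrum_of_nonneg_add_smul_one hP), Complex.ofReal_re _⟩, ?_⟩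
  rintro _ ⟨z, hz, rfl⟩
  have h1 := norm_le_specRadius ((add_mem_spectrum_map_add_smul_one_iff M c z).2 hz)
  have h2 := Complex.re_le_norm (z + c)
  rw [Complex.add_re, Complex.ofReal_re] at h2
  linarith

theorem IsMetzler.specRealBound_mem_spectrum [NeZero N] (hM : IsMetzler M) :
    specRealBound M ∈ spectrum ℝ M := by
  obtain ⟨c, hP⟩ := hM.exists_nonneg_add_smul_one
  rw [specRealBound_eq_specRadius_sub hP]
  exact sub_mem_spectrum_of_nonneg_add_smul_one hP

theorem IsMetzler.isUnit_and_inv_nonneg [NeZero N] (hM : IsMetzler M)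
    (ht : specRealBound M < t) : IsUnit (t • 1 - M) ∧ ∀ i j, 0 ≤ (t • 1 - M)⁻¹ i j := by
  obtain ⟨c, hP⟩ := hM.exists_nonneg_add_smul_one
  rw [specRealBound_eq_specRadius_sub hP, sub_lt_iff_lt_add] at ht
  have hshift : (t + c) • 1 - (M + c • 1) = t • 1 - M := by rw [add_smul]; abel
  rw [← hshift]
  exact ⟨isUnit_smul_one_sub_of_specRadius_lt ht, inv_smul_one_sub_nonneg hP ht⟩

end Metzler

section Irreducible

variable {N : ℕ} [NeZero N] {P : Matrix (Fin N) (Fin N) ℝ}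

theorem exists_nonneg_smul_le_mulVec (hP : ∀ i j, 0 ≤ P i j) :
    ∃ y : Fin N → ℝ, 0 ≤ y ∧ y ≠ 0 ∧ specRadius P • y ≤ P *ᵥ y := by
  obtain ⟨v, hv0, hv⟩ := exists_pow_mulVec_eq_smul_of_mem_spectrum
    ((ofReal_mem_spectrum_map_iff P _).2 (specRadius_mem_spectrum hP))
  refine ⟨fun i => ‖v i‖, fun i => norm_nonneg _, fun h => hv0 ?_, fun i => ?_⟩
  · ext i; simpa using congrFun h i
  calc specRadius P * ‖v i‖ = ‖(P.map Complex.ofReal *ᵥ v) i‖ := by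
        rw [← pow_one (P.map Complex.ofReal), hv 1, pow_one, Pi.smul_apply, smul_eq_mul,
          norm_mul, Complex.norm_real, Real.norm_of_nonneg (specRadius_nonneg P)]
    _ ≤ ∑ j, P i j * ‖v j‖ := by
        rw [mulVec, dotProduct]
        refine (norm_sum_le _ _).trans_eq (Finset.sum_congr rfl fun j _ => ?_)
        rw [map_apply, norm_mul, Complex.norm_real, Real.norm_of_nonneg (hP i j)]

theorem exists_pos_mulVec_eq_specRadius_smul (hP : ∀ i j, 0 ≤ P i j)
    (hirr : ∀ i j, ∃ k, 0 < (P ^ k) i j) :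
    ∃ w : Fin N → ℝ, (∀ i, 0 < w i) ∧ P *ᵥ w = specRadius P • w := by
  obtain ⟨y, hy, hy0, hρy⟩ := exists_nonneg_smul_le_mulVec hP
  obtain ⟨G, hG, hPG⟩ := exists_pos_commute hP hirr
  have hPGy : P *ᵥ (G *ᵥ y) = G *ᵥ (P *ᵥ y) := by rw [mulVec_mulVec, hPG.eq, ← mulVec_mulVec]
  suffices hPy : P *ᵥ y = specRadius P • y from
    ⟨G *ᵥ y, mulVec_pos_of_pos hG hy hy0, by rw [hPGy, hPy, mulVec_smul]⟩
  -- otherwise `G` turns the defect `P y - ρ y` into a strictly positive one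
  by_contra hne
  set d := P *ᵥ y - specRadius P • y
  have hd : ∀ i, 0 < (G *ᵥ d) i :=
    mulVec_pos_of_pos hG (sub_nonneg.2 hρy) (sub_ne_zero.2 hne)
  obtain ⟨δ, hδ, hδd⟩ := exists_pos_smul_le hd (mulVec_pos_of_pos hG hy hy0)
  have hle : (specRadius P + δ) • (G *ᵥ y) ≤ P *ᵥ (G *ᵥ y) :=
    calc (specRadius P + δ) • (G *ᵥ y) = specRadius P • (G *ᵥ y) + δ • (G *ᵥ y) := add_smul ..
      _ ≤ specRadius P • (G *ᵥ y) + G *ᵥ d := add_le_add_right hδd _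
      _ = P *ᵥ (G *ᵥ y) := by rw [hPGy, mulVec_sub, mulVec_smul, add_sub_cancel]
  have := le_specRadius_of_smul_le_mulVec hP (mulVec_nonneg_of_nonneg (fun i j => (hG i j).le) hy)
    (fun h => (mulVec_pos_of_pos hG hy hy0 0).ne' (congrFun h 0)) hle
  linarith

theorem MetzlerIrreducible.exists_pos_mulVec_eq_specRealBound_smul
    {M : Matrix (Fin N) (Fin N) ℝ} (hM : MetzlerIrreducible M) :
    ∃ w : Fin N → ℝ, (∀ i, 0 < w i) ∧ M *ᵥ w = specRealBound M • w := by
  obtain ⟨c, hP, hconn⟩ := hM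
  obtain ⟨w, hw, hPw⟩ := exists_pos_mulVec_eq_specRadius_smul hP fun i j =>
    (hconn i j).imp fun _ => And.right
  refine ⟨w, hw, ?_⟩
  rw [specRealBound_eq_specRadius_sub hP, sub_smul, ← hPw, add_mulVec, smul_mulVec, one_mulVec,
    add_sub_cancel_right]

end Irreducible

theorem mem_spectrum_iff_one_mem_spectrum_mul_inv {N : ℕ} {A T U : Matrix (Fin N) (Fin N) ℝ}
    (hA : A = T + U) {t : ℝ} (hu : IsUnit (t • 1 - U)) :
    t ∈ spectrum ℝ A ↔ 1 ∈ spectrum ℝ (T * (t • 1 - U)⁻¹) := by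
  have key : t • 1 - A = (1 - T * (t • 1 - U)⁻¹) * (t • 1 - U) := by
    rw [sub_mul, one_mul, mul_assoc, nonsing_inv_mul _ ((isUnit_iff_isUnit_det _).1 hu), mul_one,
      hA]
    abel
  rw [spectrum.mem_iff, spectrum.mem_iff, Algebra.algebraMap_eq_smul_one,
    Algebra.algebraMap_eq_smul_one, one_smul, key, hu.mul_right_iff]

structure IsRegularSplitting {N : ℕ} (A T U : Matrix (Fin N) (Fin N) ℝ) : Prop where
  eq_add : A = T + U
  nonneg : ∀ i j, 0 ≤ T i j
  isMetzler : IsMetzler U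
  isHurwitz : IsHurwitz U

namespace IsRegularSplitting

variable {N : ℕ} [NeZero N] {A T U : Matrix (Fin N) (Fin N) ℝ} {t t' : ℝ}

theorem isUnit_and_inv_nonneg (h : IsRegularSplitting A T U) (ht : 0 ≤ t) :
    IsUnit (t • 1 - U) ∧ ∀ i j, 0 ≤ (t • 1 - U)⁻¹ i j :=
  h.isMetzler.isUnit_and_inv_nonneg (h.isHurwitz.specRealBound_neg.trans_le ht)

theorem neg_mul_inv_eq (h : IsRegularSplitting A T U) :
    -(T * U⁻¹) = T * ((0 : ℝ) • 1 - U)⁻¹ := by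
  have hU : IsUnit U := by simpa using (h.isUnit_and_inv_nonneg le_rfl).1.neg
  have hinv : (-U)⁻¹ = -U⁻¹ :=
    inv_eq_right_inv (by rw [neg_mul_neg, mul_nonsing_inv _ ((isUnit_iff_isUnit_det U).1 hU)])
  rw [zero_smul, zero_sub, hinv, mul_neg]

theorem specRadius_antitone (h : IsRegularSplitting A T U) (ht : 0 ≤ t) (htt' : t ≤ t') :
    specRadius (T * (t' • 1 - U)⁻¹) ≤ specRadius (T * (t • 1 - U)⁻¹) := by
  obtain ⟨hu, hR⟩ := h.isUnit_and_inv_nonneg ht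
  obtain ⟨hu', hR'⟩ := h.isUnit_and_inv_nonneg (ht.trans htt')
  have hres : (t • 1 - U)⁻¹ - (t' • 1 - U)⁻¹ =
      (t' - t) • ((t • 1 - U)⁻¹ * (t' • 1 - U)⁻¹) := by
    rw [Matrix.inv_sub_inv (by simp [hu, hu']), sub_sub_sub_cancel_right, ← sub_smul,
      Matrix.mul_smul, mul_one, Matrix.smul_mul]
  refine specRadius_mono (mul_nonneg_entrywise h.nonneg hR')
    (mul_le_mul_entrywise_left h.nonneg fun i j => sub_nonneg.1 ?_)
  rw [← Matrix.sub_apply, hres, Matrix.smul_apply, smul_eq_mul]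
  exact mul_nonneg (sub_nonneg.2 htt') (mul_nonneg_entrywise hR hR' i j)

theorem one_le_specRadius_mul_inv (h : IsRegularSplitting A T U) (ht : 0 ≤ t)
    (hmem : t ∈ spectrum ℝ A) : 1 ≤ specRadius (T * (t • 1 - U)⁻¹) :=
  le_specRadius_of_mem_spectrum ((mem_spectrum_iff_one_mem_spectrum_mul_inv h.eq_add
    (h.isUnit_and_inv_nonneg ht).1).1 hmem)

theorem one_le_specRadius (h : IsRegularSplitting A T U) (ht : 0 ≤ t)
    (hmem : t ∈ spectrum ℝ A) : 1 ≤ specRadius (T * ((0 : ℝ) • 1 - U)⁻¹) :=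
  (h.one_le_specRadius_mul_inv ht hmem).trans (h.specRadius_antitone le_rfl ht)

theorem specRadius_lt_one (h : IsRegularSplitting A T U) (hA : IsMetzler A)
    (hs : specRealBound A < 0) : specRadius (T * ((0 : ℝ) • 1 - U)⁻¹) < 1 := by
  obtain ⟨hu, hV⟩ := h.isUnit_and_inv_nonneg le_rfl
  obtain ⟨huA, hW⟩ := hA.isUnit_and_inv_nonneg hs
  set V := ((0 : ℝ) • 1 - U)⁻¹
  set W := ((0 : ℝ) • 1 - A)⁻¹
  have hVU : V * ((0 : ℝ) • 1 - U) = 1 := nonsing_inv_mul _ ((isUnit_iff_isUnit_det _).1 hu)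
  have hAW : ((0 : ℝ) • 1 - A) * W = 1 := mul_nonsing_inv _ ((isUnit_iff_isUnit_det _).1 huA)
  -- `1 - V T = V (-A)`, so its inverse is `(-A)⁻¹ (-U) = 1 + W T`
  have hinv : (1 - V * T) * (1 + W * T) = 1 :=
    calc (1 - V * T) * (1 + W * T) = V * ((0 : ℝ) • 1 - A) * (1 + W * T) := by
          rw [h.eq_add, show (0 : ℝ) • 1 - (T + U) = ((0 : ℝ) • 1 - U) - T by abel, mul_sub,
            hVU]
      _ = V * (((0 : ℝ) • 1 - A) + T) := by
          rw [mul_assoc, mul_add, mul_one, ← mul_assoc _ W, hAW, one_mul]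
      _ = 1 := by rw [h.eq_add, show (0 : ℝ) • 1 - (T + U) + T = (0 : ℝ) • 1 - U by abel, hVU]
  rw [specRadius_mul_comm]
  refine specRadius_lt_one_of_mul_eq_one (mul_nonneg_entrywise hV h.nonneg) (fun i j => ?_) hinv
  rw [Matrix.add_apply]
  refine add_nonneg ?_ (mul_nonneg_entrywise hW h.nonneg i j)
  rw [Matrix.one_apply]
  split_ifs <;> norm_num

theorem one_lt_specRadius (h : IsRegularSplitting A T U) (hs : 0 < t)
    (hmem : t ∈ spectrum ℝ A) : 1 < specRadius (T * ((0 : ℝ) • 1 - U)⁻¹) := by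
  refine (h.one_le_specRadius hs.le hmem).lt_of_ne fun h1 => ?_
  -- otherwise `ρ(T (r - U)⁻¹) = 1` for every `r ∈ [0, t]`, making each such `r` an eigenvalue
  have hsub : Set.Icc 0 t ⊆ spectrum ℝ A := fun r ⟨hr, hrt⟩ => by
    obtain ⟨hu, hR⟩ := h.isUnit_and_inv_nonneg hr
    have hle : specRadius (T * (r • 1 - U)⁻¹) ≤ 1 := h1 ▸ h.specRadius_antitone le_rfl hr
    have hge : 1 ≤ specRadius (T * (r • 1 - U)⁻¹) :=
      (h.one_le_specRadius_mul_inv hs.le hmem).trans (h.specRadius_antitone hr hrt)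
    rw [mem_spectrum_iff_one_mem_spectrum_mul_inv h.eq_add hu, ← le_antisymm hle hge]
    exact specRadius_mem_spectrum (mul_nonneg_entrywise h.nonneg hR)
  exact Set.not_infinite.2 ((Matrix.finite_spectrum A).subset hsub) (Set.Icc_infinite hs)

theorem specRadius_le_one (h : IsRegularSplitting A T U) {w : Fin N → ℝ} (hw : ∀ i, 0 < w i)
    (hAw : A *ᵥ w = 0) : specRadius (T * ((0 : ℝ) • 1 - U)⁻¹) ≤ 1 := by
  obtain ⟨hu, hV⟩ := h.isUnit_and_inv_nonneg le_rfl
  have hTw : T *ᵥ w = ((0 : ℝ) • 1 - U) *ᵥ w := by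
    rw [h.eq_add, add_mulVec] at hAw
    rw [zero_smul, zero_sub, neg_mulVec, eq_neg_of_add_eq_zero_left hAw]
  rw [specRadius_mul_comm]
  refine specRadius_le_of_mulVec_le_smul (mul_nonneg_entrywise hV h.nonneg) hw zero_le_one
    (le_of_eq ?_)
  rw [one_smul, ← mulVec_mulVec, hTw, mulVec_mulVec,
    nonsing_inv_mul _ ((isUnit_iff_isUnit_det _).1 hu), one_mulVec]

end IsRegularSplitting

/-- for an irreducible Metzler matrix `A` with regular splitting
`A = T + U` (`T ⪰ 0`, `U` Metzler and Hurwitz), the leading eigenvalue of `A`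
is positive (resp. zero) iff `ρ(−T U⁻¹) > 1` (resp. `= 1`). -/
theorem regular_splitting_threshold
    (N : ℕ) (hN : 0 < N)
    (A T U : Matrix (Fin N) (Fin N) ℝ)
    (hmetz : IsMetzler A) (hirr : MetzlerIrreducible A)
    (hsplit : A = T + U)
    (hT : ∀ i j, 0 ≤ T i j)
    (hUmetz : IsMetzler U) (hUhurwitz : IsHurwitz U) :
    (0 < specRealBound A ↔ 1 < specRadius (-(T * U⁻¹))) ∧
    (specRealBound A = 0 ↔ specRadius (-(T * U⁻¹)) = 1) := by
  have : NeZero N := ⟨hN.ne'⟩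
  have h : IsRegularSplitting A T U := ⟨hsplit, hT, hUmetz, hUhurwitz⟩
  have hs := hmetz.specRealBound_mem_spectrum
  have h_zero : specRealBound A = 0 → specRadius (T * ((0 : ℝ) • 1 - U)⁻¹) ≤ 1 := fun hs0 => by
    obtain ⟨w, hw, hAw⟩ := hirr.exists_pos_mulVec_eq_specRealBound_smul
    exact h.specRadius_le_one hw (by rw [hAw, hs0, zero_smul])
  rw [h.neg_mul_inv_eq]
  refine ⟨⟨fun hpos => h.one_lt_specRadius hpos hs, fun hρ => ?_⟩,
    ⟨fun hzero => (h_zero hzero).antisymm (h.one_le_specRadius hzero.ge (hzero ▸ hs)),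
      fun hρ => ?_⟩⟩
  all_goals rcases lt_trichotomy (specRealBound A) 0 with hneg | hzero | hpos
  all_goals first
    | linarith [h.specRadius_lt_one hmetz hneg]
    | linarith [h_zero hzero]
    | linarith [h.one_lt_specRadius hpos hs]
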